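/- arXiv:2605.06298 — 2 statements merged into one kernel-verified Lean document; each statement's English description precedes it below -/
import Mathlib

section
/- Let Δ > 0 be a sampling interval and let f, g : ℝ → ℂ be continuous integrable functions whose Fourier transforms both vanish outside the closed interval [−ξ, ξ] for some ξ with ξ < 1/(2Δ) (i.e., both functions contain no spatial frequencies reaching the Nyquist frequency 1/(2Δ)). If f(nΔ) = g(nΔ) for every integer n, then f = g; that is, a band-limited continuous integrable function is unambiguously determined by its uniform samples at spacing Δ. -/
open MeasureTheory Set FourierTransform

/-!
The difference `h = f - g` vanishes at the samples `nΔ`. Its Fourier transform `F = 𝓕 h` is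
continuous and supported in an open interval of length `1 / Δ`, so its `1 / Δ`-periodization is a
continuous function on the circle whose `n`-th Fourier coefficient is `Δ • 𝓕 F (nΔ)`, and
`𝓕 F (nΔ) = h (-nΔ) = 0` by Fourier inversion. A continuous function on the circle with
vanishing Fourier coefficients is zero, so `F = 0`, and by inversion again `h = 0`.
-/

section FourierTransform

variable {V E : Type*} [NormedAddCommGroup V] [InnerProductSpace ℝ V] [MeasurableSpace V]
  [BorelSpace V] [FiniteDimensional ℝ V] [NormedAddCommGroup E] [NormedSpace ℂ E]

theorem Real.fourier_sub {f g : V → E} (hf : Integrable f) (hg : Integrable g) :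
    𝓕 (f - g) = 𝓕 f - 𝓕 g := by
  ext w
  simp only [Real.fourier_eq, Pi.sub_apply, smul_sub]
  exact integral_sub ((Real.fourierIntegral_convergent_iff w).2 hf)
    ((Real.fourierIntegral_convergent_iff w).2 hg)

theorem Real.continuous_fourier {f : V → E} (hf : Integrable f) : Continuous (𝓕 f) :=
  VectorFourier.fourierIntegral_continuous Real.continuous_fourierChar continuous_inner hf

theorem Continuous.fourier_fourier_eq_neg [CompleteSpace E] {f : V → E} (hf : Continuous f)
    (hf_int : Integrable f) (hf_int' : Integrable (𝓕 f)) (v : V) : 𝓕 (𝓕 f) v = f (-v) := by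
  rw [← neg_neg v, ← Real.fourierInv_eq_fourier_neg, neg_neg,
    hf_int.fourierInv_fourier_eq hf_int' hf.continuousAt]

end FourierTransform

namespace AddCircle

variable {T : ℝ} [Fact (0 < T)]

theorem eq_zero_of_fourierCoeff_eq_zero {G : AddCircle T → ℂ} (hG : Continuous G)
    (hcoeff : ∀ n, fourierCoeff G n = 0) : G = 0 := by
  funext x
  have hsum := has_pointwise_sum_fourier_series_of_summable
    (f := (⟨G, hG⟩ : C(AddCircle T, ℂ))) (summable_zero.congr fun n => (hcoeff n).symm) x
  simp only [ContinuousMap.coe_mk, hcoeff, zero_smul] at hsum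
  exact hsum.unique hasSum_zero

theorem fourierCoeff_liftIco_eq_fourier {a : ℝ} {F : ℝ → ℂ}
    (hF : ∀ x ∉ Ioo a (a + T), F x = 0) (n : ℤ) :
    fourierCoeff (liftIco T a F) n = T⁻¹ • 𝓕 F (n / T) := by
  have hT : 0 < T := Fact.out
  rw [fourierCoeff_liftIco_eq F, fourierCoeffOn_eq_integral, add_sub_cancel_left,
    intervalIntegral.integral_of_le (by linarith), integral_Ioc_eq_integral_Ioo,
    setIntegral_eq_integral_of_forall_compl_eq_zero fun x hx => by rw [hF x hx, smul_zero],
    Real.fourier_real_eq_integral_exp_smul, one_div]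
  congr 1
  refine integral_congr_ae (.of_forall fun x => ?_)
  simp only [fourier_coe_apply, smul_eq_mul]
  congr 2
  push_cast
  field_simp

end AddCircle

theorem eq_zero_of_fourier_intCast_div_eq_zero {T a : ℝ} (hT : 0 < T) {F : ℝ → ℂ}
    (hF : Continuous F) (hF_supp : ∀ x ∉ Ioo a (a + T), F x = 0)
    (hF_lattice : ∀ n : ℤ, 𝓕 F (n / T) = 0) : F = 0 := by
  have : Fact (0 < T) := ⟨hT⟩
  have hG : Continuous (AddCircle.liftIco T a F) := by
    refine AddCircle.liftIco_continuous ?_ hF.continuousOn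
    rw [hF_supp a (by simp), hF_supp (a + T) (by simp)]
  have hG_zero := AddCircle.eq_zero_of_fourierCoeff_eq_zero hG fun n => by
    rw [AddCircle.fourierCoeff_liftIco_eq_fourier hF_supp, hF_lattice, smul_zero]
  funext x
  by_cases hx : x ∈ Ioo a (a + T)
  · rw [← AddCircle.liftIco_coe_apply (f := F) (Ioo_subset_Ico_self hx), hG_zero,
      Pi.zero_apply, Pi.zero_apply]
  · exact hF_supp x hx

theorem eq_zero_of_bandlimited_of_samples_eq_zero {Δ a : ℝ} (hΔ : 0 < Δ) {h : ℝ → ℂ}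
    (hh : Continuous h) (hh_int : Integrable h)
    (hband : ∀ w ∉ Ioo a (a + Δ⁻¹), 𝓕 h w = 0) (hsamples : ∀ n : ℤ, h (n * Δ) = 0) : h = 0 := by
  have hF : Continuous (𝓕 h) := Real.continuous_fourier hh_int
  have hF_int : Integrable (𝓕 h) := hF.integrable_of_hasCompactSupport <|
    .intro isCompact_Icc fun w hw => hband w fun hw' => hw (Ioo_subset_Icc_self hw')
  have hF_zero : 𝓕 h = 0 := by
    refine eq_zero_of_fourier_intCast_div_eq_zero (inv_pos.2 hΔ) hF hband fun n => ?_
    rw [div_inv_eq_mul, hh.fourier_fourier_eq_neg hh_int hF_int, ← neg_mul, ← Int.cast_neg,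
      hsamples]
  rw [← hh.fourierInv_fourier_eq hh_int hF_int, hF_zero]
  ext x
  simp [Real.fourierInv_eq]

/-- **Nyquist–Shannon sampling theorem (uniqueness form).**
If `f` and `g` are continuous integrable functions on `ℝ` whose Fourier transforms vanish
outside `[-ξ, ξ]` for some `ξ` strictly below the Nyquist frequency `1 / (2Δ)` of a sampling
interval `Δ > 0`, and `f` and `g` agree at every sample point `n • Δ` (`n : ℤ`), then
`f = g`: a band-limited function is unambiguously determined by its uniform samples. -/
theorem nyquist_shannon_sampling_uniqueness
    (Δ ξ : ℝ) (hΔ : 0 < Δ) (hξ : ξ < 1 / (2 * Δ))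
    (f g : ℝ → ℂ)
    (hf_cont : Continuous f) (hg_cont : Continuous g)
    (hf_int : MeasureTheory.Integrable f) (hg_int : MeasureTheory.Integrable g)
    (hf_band : ∀ w : ℝ, w ∉ Set.Icc (-ξ) ξ → FourierTransform.fourier f w = 0)
    (hg_band : ∀ w : ℝ, w ∉ Set.Icc (-ξ) ξ → FourierTransform.fourier g w = 0)
    (h_samples : ∀ n : ℤ, f (n * Δ) = g (n * Δ)) :
    f = g := by
  have hIcc_subset : Icc (-ξ) ξ ⊆ Ioo (-(1 / (2 * Δ))) (-(1 / (2 * Δ)) + Δ⁻¹) := by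
    have : -(1 / (2 * Δ)) + Δ⁻¹ = 1 / (2 * Δ) := by field_simp; ring
    rw [this]
    exact Icc_subset_Ioo (neg_lt_neg hξ) hξ
  rw [← sub_eq_zero]
  refine eq_zero_of_bandlimited_of_samples_eq_zero (a := -(1 / (2 * Δ))) hΔ
    (hf_cont.sub hg_cont) (hf_int.sub hg_int) (fun w hw => ?_) (fun n => ?_)
  · have hw' : w ∉ Icc (-ξ) ξ := fun hw' => hw (hIcc_subset hw')
    rw [Real.fourier_sub hf_int hg_int, Pi.sub_apply, hf_band w hw', hg_band w hw', sub_zero]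
  · rw [Pi.sub_apply, h_samples n, sub_self]
end

section
/- Let μ and ν be Borel probability measures on ℝ with finite first moments (∫|x| dμ < ∞ and ∫|x| dν < ∞), and let F_μ and F_ν denote their cumulative distribution functions. Then the Wasserstein-1 distance between μ and ν, defined as the infimum over all couplings γ (probability measures on ℝ × ℝ whose first marginal is μ and whose second marginal is ν) of ∫ |u − v| dγ(u, v), equals the integral ∫_ℝ |F_μ(x) − F_ν(x)| dx. -/
/-!
Layer cake: `|u - v|` is the Lebesgue measure of `{x | (u ≤ x) ≠ (v ≤ x)}`, so by Tonelli the
cost of a coupling `γ` is `∫ γ ({p | p.1 ≤ x} ∆ {p | p.2 ≤ x}) dx`. Since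
`γ (A ∆ B) ≥ |γ A - γ B|` and the two events have probabilities `F_μ x` and `F_ν x`, every
coupling costs at least `∫ |F_μ - F_ν|`. Equality holds for the comonotone coupling, the image of
Lebesgue measure on `(0, 1)` under `t ↦ (F_μ⁻¹ t, F_ν⁻¹ t)`: there the two events are nested.
-/

open MeasureTheory Set Filter Topology
open scoped ENNReal symmDiff

lemma Real.volume_Ici_symmDiff_Ici (u v : ℝ) : volume (Ici u ∆ Ici v) = ENNReal.ofReal |u - v| := by
  wlog h : u ≤ v generalizing u v
  · rw [symmDiff_comm, abs_sub_comm]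
    exact this v u (le_of_not_ge h)
  rw [symmDiff_of_ge (Ici_subset_Ici.2 h), Ici_sdiff_Ici, Real.volume_Ico, abs_sub_comm,
    abs_of_nonneg (sub_nonneg.2 h)]

lemma Real.volume_restrict_Ioo_zero_one_Iic {c : ℝ} (hc : c ≤ 1) :
    volume.restrict (Ioo (0 : ℝ) 1) (Iic c) = ENNReal.ofReal c := by
  rw [Measure.restrict_congr_set Ioo_ae_eq_Ioc, Measure.restrict_apply measurableSet_Iic,
    Iic_inter_Ioc_of_le hc, Real.volume_Ioc, sub_zero]

instance Real.isProbabilityMeasure_volume_restrict_Ioo_zero_one :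
    IsProbabilityMeasure (volume.restrict (Ioo (0 : ℝ) 1)) :=
  ⟨by simp⟩

namespace MeasureTheory

variable {α : Type*} [MeasurableSpace α]

lemma ofReal_abs_measureReal_sub_le_measure_symmDiff (γ : Measure α) [IsFiniteMeasure γ]
    (s t : Set α) : ENNReal.ofReal |γ.real s - γ.real t| ≤ γ (s ∆ t) := by
  wlog h : γ.real t ≤ γ.real s generalizing s t
  · rw [abs_sub_comm, symmDiff_comm]
    exact this t s (le_of_not_ge h)
  rw [abs_of_nonneg (sub_nonneg.2 h), ENNReal.ofReal_sub _ measureReal_nonneg,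
    ofReal_measureReal, ofReal_measureReal]
  exact le_measure_symmDiff

lemma measure_symmDiff_eq_ofReal_abs_measureReal_sub (γ : Measure α) [IsFiniteMeasure γ]
    {s t : Set α} (hs : NullMeasurableSet s γ) (ht : NullMeasurableSet t γ)
    (hst : s ⊆ t ∨ t ⊆ s) :
    γ (s ∆ t) = ENNReal.ofReal |γ.real s - γ.real t| := by
  wlog h : t ⊆ s generalizing s t
  · rw [abs_sub_comm, symmDiff_comm]
    exact this ht hs hst.symm (hst.resolve_right h)
  rw [symmDiff_of_ge h, measure_sdiff h ht (measure_ne_top _ _), abs_of_nonneg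
    (sub_nonneg.2 (measureReal_mono h)), ENNReal.ofReal_sub _ measureReal_nonneg,
    ofReal_measureReal, ofReal_measureReal]

lemma lintegral_ofReal_abs_sub_eq_lintegral_measure_symmDiff (γ : Measure α) [SFinite γ]
    {f g : α → ℝ} (hf : Measurable f) (hg : Measurable g) :
    ∫⁻ a, ENNReal.ofReal |f a - g a| ∂γ = ∫⁻ x, γ ({a | f a ≤ x} ∆ {a | g a ≤ x}) := by
  set S : Set (α × ℝ) := {p | f p.1 ≤ p.2} ∆ {p | g p.1 ≤ p.2}
  have hS : MeasurableSet S :=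
    (measurableSet_le (hf.comp measurable_fst) measurable_snd).symmDiff
      (measurableSet_le (hg.comp measurable_fst) measurable_snd)
  calc ∫⁻ a, ENNReal.ofReal |f a - g a| ∂γ = γ.prod volume S := by
        simp_rw [Measure.prod_apply hS, ← Real.volume_Ici_symmDiff_Ici]
        rfl
    _ = ∫⁻ x, γ ({a | f a ≤ x} ∆ {a | g a ≤ x}) := Measure.prod_apply_symm hS

end MeasureTheory

namespace ProbabilityTheory

@[fun_prop]
lemma measurable_cdf (μ : Measure ℝ) : Measurable (cdf μ) :=
  (monotone_cdf μ).measurable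

variable {α : Type*} [MeasurableSpace α]

lemma cdf_map {γ : Measure α} [IsProbabilityMeasure γ] {f : α → ℝ} (hf : Measurable f) (x : ℝ) :
    cdf (γ.map f) x = γ.real {a | f a ≤ x} := by
  have := Measure.isProbabilityMeasure_map (μ := γ) hf.aemeasurable
  rw [cdf_eq_real, map_measureReal_apply hf measurableSet_Iic]
  rfl

lemma lintegral_ofReal_abs_cdf_map_sub_le (γ : Measure α) [IsProbabilityMeasure γ]
    {f g : α → ℝ} (hf : Measurable f) (hg : Measurable g) :
    ∫⁻ x, ENNReal.ofReal |cdf (γ.map f) x - cdf (γ.map g) x| ≤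
      ∫⁻ a, ENNReal.ofReal |f a - g a| ∂γ := by
  rw [lintegral_ofReal_abs_sub_eq_lintegral_measure_symmDiff γ hf hg]
  refine lintegral_mono fun x => ?_
  rw [cdf_map hf, cdf_map hg]
  exact ofReal_abs_measureReal_sub_le_measure_symmDiff γ _ _

lemma integrable_of_integrable_abs_map {γ : Measure α} {f : α → ℝ} (hf : Measurable f)
    (h : Integrable (fun x => |x|) (γ.map f)) : Integrable f γ :=
  (integrable_norm_iff hf.aestronglyMeasurable).1
    ((integrable_map_measure (by fun_prop) hf.aemeasurable).1 h)

lemma integral_abs_cdf_map_sub_le (γ : Measure α) [IsProbabilityMeasure γ]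
    {f g : α → ℝ} (hf : Measurable f) (hg : Measurable g) (hfi : Integrable f γ)
    (hgi : Integrable g γ) :
    ∫ x, |cdf (γ.map f) x - cdf (γ.map g) x| ≤ ∫ a, |f a - g a| ∂γ := by
  rw [integral_eq_lintegral_of_nonneg_ae (ae_of_all _ fun _ => abs_nonneg _) (by fun_prop),
    integral_eq_lintegral_of_nonneg_ae (ae_of_all _ fun _ => abs_nonneg _) (by fun_prop)]
  exact ENNReal.toReal_mono (hfi.sub hgi).abs.lintegral_lt_top.ne
    (lintegral_ofReal_abs_cdf_map_sub_le γ hf hg)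

/-- Junk outside `(0, 1)`, which is harmless: only its values on `(0, 1)` are ever used. -/
noncomputable def quantile (μ : Measure ℝ) (t : ℝ) : ℝ := sInf {x | t ≤ cdf μ x}

section Quantile

variable (μ : Measure ℝ)

lemma quantile_le_iff {t x : ℝ} (ht : t ∈ Ioo (0 : ℝ) 1) : quantile μ t ≤ x ↔ t ≤ cdf μ x := by
  have hne : {x | t ≤ cdf μ x}.Nonempty :=
    ((tendsto_cdf_atTop μ).eventually (eventually_ge_nhds ht.2)).exists
  have hbdd : BddBelow {x | t ≤ cdf μ x} := by
    obtain ⟨b, hb⟩ :=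
      ((tendsto_cdf_atBot μ).eventually (eventually_lt_nhds ht.1)).exists_forall_of_atBot
    exact ⟨b, fun y hy => le_of_not_gt fun hyb =>
      (hy.trans (monotone_cdf μ hyb.le)).not_gt (hb b le_rfl)⟩
  refine ⟨fun h => ?_, fun h => csInf_le hbdd h⟩
  -- the infimum is attained because the CDF is right-continuous
  have hcont : Tendsto (cdf μ) (𝓝[>] x) (𝓝 (cdf μ x)) :=
    ((cdf μ).right_continuous x).mono Ioi_subset_Ici_self
  refine ge_of_tendsto hcont (eventually_nhdsWithin_of_forall fun y hy => ?_)
  obtain ⟨z, hz, hzy⟩ := exists_lt_of_csInf_lt hne (h.trans_lt hy)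
  exact hz.trans (monotone_cdf μ hzy.le)

lemma monotoneOn_quantile : MonotoneOn (quantile μ) (Ioo 0 1) := fun _ hs _ ht hst =>
  (quantile_le_iff μ hs).2 (hst.trans ((quantile_le_iff μ ht).1 le_rfl))

lemma aemeasurable_quantile : AEMeasurable (quantile μ) (volume.restrict (Ioo 0 1)) :=
  aemeasurable_restrict_of_monotoneOn measurableSet_Ioo (monotoneOn_quantile μ)

lemma quantile_preimage_Iic_ae_eq (x : ℝ) :
    quantile μ ⁻¹' Iic x =ᵐ[volume.restrict (Ioo 0 1)] Iic (cdf μ x) := by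
  filter_upwards [ae_restrict_mem measurableSet_Ioo] with t ht
  exact propext (quantile_le_iff μ ht)

lemma map_quantile [IsProbabilityMeasure μ] :
    (volume.restrict (Ioo 0 1)).map (quantile μ) = μ := by
  have := Measure.isProbabilityMeasure_map (aemeasurable_quantile μ)
  refine Measure.ext_of_Iic _ _ fun x => ?_
  rw [Measure.map_apply_of_aemeasurable (aemeasurable_quantile μ) measurableSet_Iic,
    measure_congr (quantile_preimage_Iic_ae_eq μ x),
    Real.volume_restrict_Ioo_zero_one_Iic (cdf_le_one μ x), ofReal_cdf]

end Quantile

noncomputable def quantileCoupling (μ ν : Measure ℝ) : Measure (ℝ × ℝ) :=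
  (volume.restrict (Ioo 0 1)).map fun t => (quantile μ t, quantile ν t)

section QuantileCoupling

variable (μ ν : Measure ℝ)

lemma aemeasurable_quantile_prodMk :
    AEMeasurable (fun t => (quantile μ t, quantile ν t)) (volume.restrict (Ioo 0 1)) :=
  (aemeasurable_quantile μ).prodMk (aemeasurable_quantile ν)

instance : IsProbabilityMeasure (quantileCoupling μ ν) :=
  Measure.isProbabilityMeasure_map (aemeasurable_quantile_prodMk μ ν)

lemma quantileCoupling_map_fst [IsProbabilityMeasure μ] :
    (quantileCoupling μ ν).map Prod.fst = μ := by
  rw [quantileCoupling, AEMeasurable.map_map_of_aemeasurable measurable_fst.aemeasurable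
    (aemeasurable_quantile_prodMk μ ν)]
  exact map_quantile μ

lemma quantileCoupling_map_snd [IsProbabilityMeasure ν] :
    (quantileCoupling μ ν).map Prod.snd = ν := by
  rw [quantileCoupling, AEMeasurable.map_map_of_aemeasurable measurable_snd.aemeasurable
    (aemeasurable_quantile_prodMk μ ν)]
  exact map_quantile ν

lemma quantileCoupling_symmDiff [IsProbabilityMeasure μ] [IsProbabilityMeasure ν] (x : ℝ) :
    quantileCoupling μ ν ({p | p.1 ≤ x} ∆ {p | p.2 ≤ x}) =
      ENNReal.ofReal |cdf μ x - cdf ν x| := by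
  have hmeas : MeasurableSet ({p : ℝ × ℝ | p.1 ≤ x} ∆ {p | p.2 ≤ x}) :=
    (measurableSet_le measurable_fst measurable_const).symmDiff
      (measurableSet_le measurable_snd measurable_const)
  have hae : (fun t => (quantile μ t, quantile ν t)) ⁻¹' ({p | p.1 ≤ x} ∆ {p | p.2 ≤ x})
      =ᵐ[volume.restrict (Ioo 0 1)] (Iic (cdf μ x) ∆ Iic (cdf ν x) : Set ℝ) :=
    (quantile_preimage_Iic_ae_eq μ x).symmDiff (quantile_preimage_Iic_ae_eq ν x)
  rw [quantileCoupling,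
    Measure.map_apply_of_aemeasurable (aemeasurable_quantile_prodMk μ ν) hmeas, measure_congr hae,
    measure_symmDiff_eq_ofReal_abs_measureReal_sub _ measurableSet_Iic.nullMeasurableSet
      measurableSet_Iic.nullMeasurableSet ((le_total _ _).imp Iic_subset_Iic.2 Iic_subset_Iic.2),
    measureReal_def, measureReal_def, Real.volume_restrict_Ioo_zero_one_Iic (cdf_le_one μ x),
    Real.volume_restrict_Ioo_zero_one_Iic (cdf_le_one ν x),
    ENNReal.toReal_ofReal (cdf_nonneg μ x), ENNReal.toReal_ofReal (cdf_nonneg ν x)]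

lemma lintegral_ofReal_abs_sub_quantileCoupling
    [IsProbabilityMeasure μ] [IsProbabilityMeasure ν] :
    ∫⁻ p, ENNReal.ofReal |p.1 - p.2| ∂quantileCoupling μ ν =
      ∫⁻ x, ENNReal.ofReal |cdf μ x - cdf ν x| := by
  simp_rw [lintegral_ofReal_abs_sub_eq_lintegral_measure_symmDiff _ measurable_fst measurable_snd,
    quantileCoupling_symmDiff]

lemma integral_abs_sub_quantileCoupling [IsProbabilityMeasure μ] [IsProbabilityMeasure ν] :
    ∫ p, |p.1 - p.2| ∂quantileCoupling μ ν = ∫ x, |cdf μ x - cdf ν x| := by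
  rw [integral_eq_lintegral_of_nonneg_ae (ae_of_all _ fun _ => abs_nonneg _) (by fun_prop),
    integral_eq_lintegral_of_nonneg_ae (ae_of_all _ fun _ => abs_nonneg _) (by fun_prop),
    lintegral_ofReal_abs_sub_quantileCoupling]

end QuantileCoupling

end ProbabilityTheory

open ProbabilityTheory

/-- **Closed form of the Wasserstein-1 distance on ℝ (Vallender, 1974).**
For Borel probability measures `μ ν` on `ℝ` with finite first moments, the infimum over all
couplings `γ` of `μ` and `ν` of the transport cost `∫ |u - v| dγ(u, v)` equals the integral
of the absolute difference of the cumulative distribution functions,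
`∫ |F_μ x - F_ν x| dx` where `F_μ x = μ (Iic x)`. -/
theorem wasserstein1_eq_integral_abs_cdf_sub
    (μ ν : Measure ℝ) [IsProbabilityMeasure μ] [IsProbabilityMeasure ν]
    (hμ : Integrable (fun x : ℝ => |x|) μ) (hν : Integrable (fun x : ℝ => |x|) ν) :
    (⨅ γ : {γ : Measure (ℝ × ℝ) // IsProbabilityMeasure γ ∧
        γ.map Prod.fst = μ ∧ γ.map Prod.snd = ν},
      ∫ p : ℝ × ℝ, |p.1 - p.2| ∂(γ : Measure (ℝ × ℝ))) =
    ∫ x : ℝ, |(μ (Set.Iic x)).toReal - (ν (Set.Iic x)).toReal| := by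
  simp only [← measureReal_def, ← cdf_eq_real]
  refine IsLeast.csInf_eq ⟨⟨⟨quantileCoupling μ ν, inferInstance, quantileCoupling_map_fst μ ν,
    quantileCoupling_map_snd μ ν⟩, integral_abs_sub_quantileCoupling μ ν⟩, forall_mem_range.2 ?_⟩
  rintro ⟨γ, hγ, rfl, rfl⟩
  exact integral_abs_cdf_map_sub_le γ measurable_fst measurable_snd
    (integrable_of_integrable_abs_map measurable_fst hμ)
    (integrable_of_integrable_abs_map measurable_snd hν)
end
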